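/- Let ζ be a q-cycle with Z₂ coefficients (q > 0) of a simplicial complex. Then for any q-simplex σ of ζ, there exists a q-cycle ζ' with Z₂ coefficients such that σ ∈ ζ', ζ' ⊆ ζ, and ζ' is q-connected (any two q-simplices of ζ' are joined by a sequence of q-simplices in ζ' where consecutive simplices share a (q−1)-face). -/

import Mathlib

/-! The simplices of ζ that are q-connected to σ within ζ form a q-connected subchain containing σ.
It is a cycle: every simplex of ζ having a (q-1)-face τ in common with a simplex of the component
is itself in the component, so the component and ζ have the same number of simplices on τ. -/

open Finset

variable {V : Type*} [DecidableEq V]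

/-- The codimension-one faces of a simplex. -/
def facetsOf (σ : Finset V) : Finset (Finset V) :=
  σ.powerset.filter (fun τ => τ.card + 1 = σ.card)

/-- The mod-2 (ℤ₂) boundary of a chain of simplices. -/
def bdry (C : Finset (Finset V)) : Finset (Finset V) :=
  (C.biUnion facetsOf).filter (fun τ => Odd ((C.filter (fun s => τ ∈ facetsOf s)).card))

/-- Connectivity of simplices inside a set Z of simplices via shared faces of k vertices. -/
def ConnIn (k : ℕ) (Z : Finset (Finset V)) : Finset V → Finset V → Prop :=
  Relation.ReflTransGen
    (fun a b => a ∈ Z ∧ b ∈ Z ∧ ∃ ρ : Finset V, ρ.card = k ∧ ρ ⊆ a ∧ ρ ⊆ b)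

section Connectivity

omit [DecidableEq V]

variable {k : ℕ} {Z : Finset (Finset V)} {σ τ : Finset V}

lemma mem_facetsOf : τ ∈ facetsOf σ ↔ τ ⊆ σ ∧ τ.card + 1 = σ.card := by
  simp [facetsOf]

lemma ConnIn.symm (h : ConnIn k Z σ τ) : ConnIn k Z τ σ := by
  induction h with
  | refl => exact Relation.ReflTransGen.refl
  | tail _ hab ih =>
    obtain ⟨ha, hb, ρ, hρ, hρa, hρb⟩ := hab
    exact ih.head ⟨hb, ha, ρ, hρ, hρb, hρa⟩

open Classical in
noncomputable def connComponent (k : ℕ) (Z : Finset (Finset V)) (σ : Finset V) :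
    Finset (Finset V) :=
  Z.filter (ConnIn k Z σ)

lemma mem_connComponent : τ ∈ connComponent k Z σ ↔ τ ∈ Z ∧ ConnIn k Z σ τ := by
  simp [connComponent]

lemma connComponent_subset : connComponent k Z σ ⊆ Z := fun _ h => (mem_connComponent.1 h).1

lemma self_mem_connComponent (hσ : σ ∈ Z) : σ ∈ connComponent k Z σ :=
  mem_connComponent.2 ⟨hσ, Relation.ReflTransGen.refl⟩

lemma ConnIn.connIn_connComponent (h : ConnIn k Z σ τ) : ConnIn k (connComponent k Z σ) σ τ := by
  induction h with
  | refl => exact Relation.ReflTransGen.refl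
  | @tail a b hσa hab ih =>
    obtain ⟨ha, hb, ρ, hρ, hρa, hρb⟩ := hab
    have hb' : b ∈ connComponent k Z σ :=
      mem_connComponent.2 ⟨hb, hσa.tail ⟨ha, hb, ρ, hρ, hρa, hρb⟩⟩
    exact ih.tail ⟨mem_connComponent.2 ⟨ha, hσa⟩, hb', ρ, hρ, hρa, hρb⟩

lemma connIn_of_mem_connComponent {τ₁ τ₂ : Finset V} (h₁ : τ₁ ∈ connComponent k Z σ)
    (h₂ : τ₂ ∈ connComponent k Z σ) : ConnIn k (connComponent k Z σ) τ₁ τ₂ :=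
  (mem_connComponent.1 h₁).2.connIn_connComponent.symm.trans
    (mem_connComponent.1 h₂).2.connIn_connComponent

end Connectivity

section Boundary

variable {k : ℕ} {Z : Finset (Finset V)} {σ τ : Finset V}

lemma filter_facetsOf_connComponent (hZ : ∀ s ∈ Z, s.card = k + 1) {s₀ : Finset V}
    (hs₀ : s₀ ∈ connComponent k Z σ) (hτ : τ ∈ facetsOf s₀) :
    (connComponent k Z σ).filter (fun s => τ ∈ facetsOf s) =
      Z.filter (fun s => τ ∈ facetsOf s) := by
  refine (filter_subset_filter _ connComponent_subset).antisymm fun s hs => ?_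
  obtain ⟨hsZ, hτs⟩ := mem_filter.1 hs
  obtain ⟨hs₀Z, hσs₀⟩ := mem_connComponent.1 hs₀
  obtain ⟨hτs₀, hcard⟩ := mem_facetsOf.1 hτ
  have hτk : τ.card = k := by have := hZ s₀ hs₀Z; omega
  exact mem_filter.2 ⟨mem_connComponent.2
    ⟨hsZ, hσs₀.tail ⟨hs₀Z, hsZ, τ, hτk, hτs₀, (mem_facetsOf.1 hτs).1⟩⟩, hτs⟩

lemma mem_bdry {C : Finset (Finset V)} :
    τ ∈ bdry C ↔ Odd (C.filter (fun s => τ ∈ facetsOf s)).card := by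
  refine ⟨fun h => (mem_filter.1 h).2, fun hodd => mem_filter.2 ⟨?_, hodd⟩⟩
  obtain ⟨s, hs⟩ := card_pos.1 hodd.pos
  rw [mem_filter] at hs
  exact mem_biUnion.2 ⟨s, hs⟩

lemma bdry_connComponent_subset (hZ : ∀ s ∈ Z, s.card = k + 1) :
    bdry (connComponent k Z σ) ⊆ bdry Z := by
  intro τ hτ
  rw [mem_bdry] at hτ ⊢
  obtain ⟨s₀, hs₀⟩ := card_pos.1 hτ.pos
  rw [mem_filter] at hs₀
  rwa [← filter_facetsOf_connComponent hZ hs₀.1 hs₀.2]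

end Boundary

theorem stmt4_general {q : ℕ} (K : Finset (Finset V))
    (ζ : Finset (Finset V)) (hζ : ∀ τ ∈ ζ, τ ∈ K ∧ τ.card = q + 1)
    (hcyc : bdry ζ = ∅) (σ : Finset V) (hσ : σ ∈ ζ) :
    ∃ ζ' ⊆ ζ, σ ∈ ζ' ∧ bdry ζ' = ∅ ∧ ∀ τ₁ ∈ ζ', ∀ τ₂ ∈ ζ', ConnIn q ζ' τ₁ τ₂ := by
  have hbdry : bdry (connComponent q ζ σ) ⊆ bdry ζ :=
    bdry_connComponent_subset fun s hs => (hζ s hs).2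
  refine ⟨connComponent q ζ σ, connComponent_subset, self_mem_connComponent hσ, ?_,
    fun _ h₁ _ h₂ => connIn_of_mem_connComponent h₁ h₂⟩
  exact subset_empty.1 (hcyc ▸ hbdry)

/-- Any q-simplex σ of a ℤ₂ q-cycle ζ (q > 0) lies in a q-connected sub-cycle ζ' ⊆ ζ. -/
theorem stmt4 {q : ℕ} (hq : 0 < q) (K : Finset (Finset V))
    (hK : ∀ σ ∈ K, ∀ τ ⊆ σ, τ ∈ K)
    (ζ : Finset (Finset V)) (hζ : ∀ τ ∈ ζ, τ ∈ K ∧ τ.card = q + 1)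
    (hcyc : bdry ζ = ∅) (σ : Finset V) (hσ : σ ∈ ζ) :
    ∃ ζ' ⊆ ζ, σ ∈ ζ' ∧ bdry ζ' = ∅ ∧ ∀ τ₁ ∈ ζ', ∀ τ₂ ∈ ζ', ConnIn q ζ' τ₁ τ₂ :=
  stmt4_general K ζ hζ hcyc σ hσ
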